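/- Calderón–Zygmund decomposition for general measures on a Lipschitz graph (part a): let Γ ⊂ ℝ^d be an n-dimensional Lipschitz graph, B ⊂ ℝ^d a ball, and μ := ℋ^n restricted to Γ ∩ B. For every finite complex Radon measure ν on ℝ^d with compact support and every λ > 2^{d+1}‖ν‖/‖μ‖, there exists a finite or countable family of cubes {Q_j} with bounded overlap (∑_j χ_{Q_j} ≤ C) and a function f ∈ L^1(μ) such that: (i) |ν|(Q_j) > 2^{−d−1} λ μ(2Q_j) for each j; (ii) |ν|(ηQ_j) ≤ 2^{−d−1} λ μ(2ηQ_j) for all η > 2; (iii) ν = f μ on ℝ^d \ Ω with |f| ≤ λ μ-a.e., where Ω := ∪_j Q_j. -/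

import Mathlib

open MeasureTheory Metric Set
open scoped NNReal ENNReal

/-- Projection onto the first `n` coordinates of `ℝ^{n+m}`. -/
noncomputable def piH (n m : ℕ) (x : EuclideanSpace ℝ (Fin (n + m))) :
    EuclideanSpace ℝ (Fin n) :=
  (WithLp.equiv 2 (Fin n → ℝ)).symm (fun i => x (Fin.castAdd m i))

/-- Projection onto the last `m` coordinates of `ℝ^{n+m}`. -/
noncomputable def piV (n m : ℕ) (x : EuclideanSpace ℝ (Fin (n + m))) :
    EuclideanSpace ℝ (Fin m) :=
  (WithLp.equiv 2 (Fin m → ℝ)).symm (fun i => x (Fin.natAdd n i))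

/-- The closed axis-parallel cube in `ℝ^{d'}` with center `c` and side length `l`. -/
def cube (d' : ℕ) (c : EuclideanSpace ℝ (Fin d')) (l : ℝ) : Set (EuclideanSpace ℝ (Fin d')) :=
  {y | ∀ i, |y i - c i| ≤ l / 2}

open Filter Topology Module

universe u

/-!
Transport both measures to `ℝ^d` with the sup norm, where the cubes are the closed balls, and
call a ball `B(x, t)` heavy when `|ν|(B(x, t)) > c μ(B(x, 2t))`, `c = 2^{-d-1} λ`. Since
`|ν|(ℝ^d) ≤ c ‖μ‖` and both measures have bounded support, heavy radii are bounded, so each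
centre of a heavy ball has a heavy radius `t` larger than half the supremum of its heavy radii;
then every `B(x, ηt)` with `η > 2` is light. Besicovitch's covering theorem extracts from these
balls a countable cover of the centres with bounded overlap.

Off the centres every ball is light, and this gives `|ν| ≤ 2^{d+1} c μ` there: at points where `μ`
is doubling with constant `2^{d+1}` at arbitrarily small scales, by differentiating along the
Besicovitch–Vitali family; the other points carry no `|ν|`-mass, because there
`|ν|(B(x, t)) ≤ c μ(B(x, 2t)) = O(t^{d+1})`, which is `o(t^d)`. The density `f` is the
Radon–Nikodym derivative of `|ν|` off the cover times the phase of `ν`.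
-/

theorem exists_mem_forall_two_lt_mul_notMem {B : Set ℝ} (hne : B.Nonempty) (hbdd : BddAbove B)
    (hpos : ∀ t ∈ B, 0 < t) : ∃ t ∈ B, ∀ η, 2 < η → η * t ∉ B := by
  have hsup : 0 < sSup B := (hpos _ hne.some_mem).trans_le (le_csSup hbdd hne.some_mem)
  obtain ⟨t, ht, hlt⟩ := exists_lt_of_lt_csSup hne (half_lt_self hsup)
  refine ⟨t, ht, fun η hη hηt => ?_⟩
  have hle := le_csSup hbdd hηt
  nlinarith [hpos t ht]

theorem Set.PairwiseDisjoint.tsum_indicator_one_le {α ι : Type*} {s : ι → Set α} {t : Set ι}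
    (ht : t.PairwiseDisjoint s) (y : α) :
    ∑' i : t, (s i).indicator (fun _ => (1 : ℝ≥0∞)) y ≤ 1 := by
  by_cases hy : ∃ i : t, y ∈ s i
  · obtain ⟨i, hi⟩ := hy
    rw [tsum_eq_single i fun j hji => indicator_of_notMem
      (fun hj => (ht j.2 i.2 (Subtype.coe_injective.ne hji)).le_bot ⟨hj, hi⟩) _]
    exact indicator_le_self' (fun _ _ => zero_le_one) y
  · push Not at hy
    simp [indicator_of_notMem (hy _)]

theorem exists_closedBall_covering_tsum_indicator_le {α : Type u} [MetricSpace α]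
    [TopologicalSpace.SeparableSpace α] [HasBesicovitchCovering α] {s : Set α} {r : α → ℝ}
    (hr : ∀ x ∈ s, 0 < r x) {R : ℝ} (hR : ∀ x ∈ s, r x ≤ R) :
    ∃ (N : ℕ) (ι : Type u) (_ : Countable ι) (x : ι → α), (∀ j, x j ∈ s) ∧
      s ⊆ ⋃ j, closedBall (x j) (r (x j)) ∧
      ∀ y, ∑' j, (closedBall (x j) (r (x j))).indicator (fun _ => (1 : ℝ≥0∞)) y ≤ N := by
  obtain ⟨N, τ, hτ, hN⟩ := HasBesicovitchCovering.no_satelliteConfig (α := α)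
  let q : Besicovitch.BallPackage s α :=
    { c := (↑), r := fun x => r x, rpos := fun x => hr x x.2, r_bound := R,
      r_le := fun x => hR x x.2 }
  obtain ⟨u, hu, hcover⟩ := Besicovitch.exist_disjoint_covering_families hτ hN q
  have hcount : ∀ i, (u i).Countable := fun i => (hu i).countable_of_nonempty_interior
    fun j _ => (nonempty_ball.2 (hr j j.2)).mono ball_subset_interior_closedBall
  have : ∀ i, Countable (u i) := fun i => (hcount i).to_subtype
  refine ⟨N, Σ i, u i, inferInstance, fun j => j.2.1, fun j => j.2.1.2, ?_, fun y => ?_⟩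
  · intro x hx
    have hx' := hcover ⟨⟨x, hx⟩, rfl⟩
    simp only [mem_iUnion] at hx'
    obtain ⟨i, j, hj, hxj⟩ := hx'
    exact mem_iUnion.2 ⟨⟨i, j, hj⟩, ball_subset_closedBall hxj⟩
  · calc ∑' j : Σ i, u i, (closedBall (j.2 : α) (r j.2)).indicator (fun _ => 1) y
          = ∑ i, ∑' j : u i, (closedBall (j : α) (r j)).indicator (fun _ => 1) y :=
          (ENNReal.tsum_sigma' _).trans (tsum_fintype _)
      _ ≤ ∑ _ : Fin N, 1 := Finset.sum_le_sum fun i _ => (hu i).tsum_indicator_one_le y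
      _ = N := by simp

theorem measure_closedBall_le_of_forall_two_pow_mul_le {α : Type*} [PseudoMetricSpace α]
    [MeasurableSpace α] (μ : Measure α) {x : α} {p : ℕ} {δ : ℝ}
    (h : ∀ t ∈ Ioo 0 δ, 2 ^ p * μ (closedBall x t) ≤ μ (closedBall x (2 * t)))
    {s : ℝ} (hs : s ∈ Ioo 0 δ) :
    μ (closedBall x s) ≤ μ (closedBall x δ) * ENNReal.ofReal (2 * s / δ) ^ p := by
  have hδ : 0 < δ := hs.1.trans hs.2
  suffices key : ∀ k : ℕ, ∀ s ∈ Ioo 0 δ, δ ≤ 2 ^ k * (2 * s) →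
      μ (closedBall x s) ≤ μ (closedBall x δ) * ENNReal.ofReal (2 * s / δ) ^ p by
    obtain ⟨k, hk⟩ := pow_unbounded_of_one_lt (δ / (2 * s)) one_lt_two
    exact key k s hs ((div_lt_iff₀ (by linarith [hs.1])).1 hk).le
  intro k
  induction k with
  | zero =>
    intro s hs hδs
    refine (measure_mono (closedBall_subset_closedBall hs.2.le)).trans (le_mul_of_one_le_right' ?_)
    refine one_le_pow₀ ?_
    rw [ENNReal.one_le_ofReal, le_div_iff₀ hδ]
    simpa using hδs
  | succ k ih =>
    intro s hs hδs
    by_cases h2s : δ ≤ 2 * s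
    · exact ih s hs (by nlinarith [one_le_pow₀ (M₀ := ℝ) (n := k) one_le_two])
    have hdouble : ENNReal.ofReal (2 * (2 * s) / δ) ^ p =
        2 ^ p * ENNReal.ofReal (2 * s / δ) ^ p := by
      rw [mul_div_assoc, ENNReal.ofReal_mul zero_le_two, ENNReal.ofReal_ofNat, mul_pow]
    have hstep := (h s hs).trans
      (ih (2 * s) ⟨by linarith [hs.1], not_le.1 h2s⟩ (by rw [pow_succ] at hδs; linarith))
    rw [hdouble, mul_left_comm] at hstep
    exact (ENNReal.mul_le_mul_iff_right (by positivity) (by simp)).1 hstep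

theorem measure_closedBall_le_of_diam_le {α : Type*} [PseudoMetricSpace α] [MeasurableSpace α]
    {σ μ : Measure α} {S : Set α} (hS : Bornology.IsBounded S) (hσS : σ Sᶜ = 0) (hμS : μ Sᶜ = 0)
    {c : ℝ≥0∞} (hσμ : σ univ ≤ c * μ univ) {x : α} {t : ℝ} (ht : diam S ≤ t) :
    σ (closedBall x t) ≤ c * μ (closedBall x (2 * t)) := by
  rcases (S ∩ closedBall x t).eq_empty_or_nonempty with hempty | ⟨k, hkS, hkx⟩
  · rw [measure_mono_null (fun y hy hyS => hempty.subset ⟨hyS, hy⟩) hσS]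
    exact zero_le
  have hSball : S ⊆ closedBall x (2 * t) := fun w hw => by
    have := dist_triangle w k x
    have := dist_le_diam_of_mem hS hw hkS
    rw [mem_closedBall] at hkx ⊢
    linarith
  calc σ (closedBall x t) ≤ σ univ := measure_mono (subset_univ _)
    _ ≤ c * μ univ := hσμ
    _ ≤ c * μ (closedBall x (2 * t)) := by
        gcongr c * ?_
        calc μ univ ≤ μ S + μ Sᶜ := measure_univ_le_add_compl S
          _ ≤ μ (closedBall x (2 * t)) := by rw [hμS, add_zero]; exact measure_mono hSball

section FiniteDimensional

variable {E : Type u} [NormedAddCommGroup E] [NormedSpace ℝ E] [FiniteDimensional ℝ E]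
  [MeasurableSpace E] [BorelSpace E]

theorem measure_eq_zero_of_measure_closedBall_le_pow_succ (ξ : Measure E) [SFinite ξ] {S : Set E}
    (h : ∀ x ∈ S, ∃ K ≠ ∞, ∃ δ > 0, ∀ t ∈ Ioo 0 δ,
      ξ (closedBall x t) ≤ K * ENNReal.ofReal t ^ (finrank ℝ E + 1)) :
    ξ S = 0 := by
  set vol : Measure E := Measure.addHaar
  have hunit : 0 < vol (ball 0 1) := measure_ball_pos _ _ one_pos
  have hsmall : ∀ x ∈ S, ∀ ε : ℝ≥0, 0 < ε →
      ∀ᶠ t in 𝓝[>] (0 : ℝ), ξ (closedBall x t) ≤ (ε • vol) (closedBall x t) := by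
    intro x hx ε hε
    obtain ⟨K, hK, δ, hδ, hKδ⟩ := h x hx
    have hlim : Tendsto (fun t : ℝ => K * ENNReal.ofReal t) (𝓝[>] 0) (𝓝 0) := by
      simpa using (ENNReal.Tendsto.const_mul
        ((ENNReal.continuous_ofReal.tendsto 0).mono_left nhdsWithin_le_nhds) (Or.inr hK))
    filter_upwards [hlim.eventually (gt_mem_nhds (by positivity : (0 : ℝ≥0∞) < ε * vol (ball 0 1))),
      Ioo_mem_nhdsGT hδ] with t ht htδ
    rw [Measure.smul_apply, Measure.addHaar_closedBall vol _ htδ.1.le, ENNReal.ofReal_pow htδ.1.le,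
      ENNReal.smul_def, smul_eq_mul]
    calc ξ (closedBall x t) ≤ K * ENNReal.ofReal t * ENNReal.ofReal t ^ finrank ℝ E := by
          rw [mul_assoc, ← pow_succ']; exact hKδ t htδ
      _ ≤ ε * vol (ball 0 1) * ENNReal.ofReal t ^ finrank ℝ E := by gcongr
      _ = ε * (ENNReal.ofReal t ^ finrank ℝ E * vol (ball 0 1)) := by ring
  have hball : ∀ R : ℕ, ξ (S ∩ ball 0 R) = 0 := by
    intro R
    have hle : ∀ ε : ℝ≥0, 0 < ε → ξ (S ∩ ball 0 R) ≤ ε * vol (ball 0 R) := fun ε hε =>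
      calc ξ (S ∩ ball 0 R) ≤ (ε • vol) (S ∩ ball 0 R) :=
            (Besicovitch.vitaliFamily ξ).measure_le_of_frequently_le _ .rfl _ fun x hx =>
              (Besicovitch.tendsto_filterAt ξ x).frequently (hsmall x hx.1 ε hε).frequently
        _ ≤ ε * vol (ball 0 R) := measure_mono inter_subset_right
    by_contra hpos
    obtain ⟨ε, hε, hlt⟩ := ENNReal.exists_nnreal_pos_mul_lt (measure_ball_lt_top (μ := vol)).ne hpos
    exact (hle ε hε).not_gt hlt
  rw [← inter_univ S, ← iUnion_ball_nat 0, inter_iUnion]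
  exact measure_iUnion_null hball

theorem restrict_le_smul_of_measure_closedBall_le (σ μ : Measure E) [SFinite σ]
    [IsLocallyFiniteMeasure μ] (c : ℝ≥0) {S : Set E}
    (hS : ∀ x ∈ S, ∀ t, 0 < t → σ (closedBall x t) ≤ c * μ (closedBall x (2 * t))) :
    σ.restrict S ≤ (2 ^ (finrank ℝ E + 1) * c) • μ := by
  set p := finrank ℝ E + 1
  set G := {x | ∃ᶠ t in 𝓝[>] (0 : ℝ), μ (closedBall x (2 * t)) ≤ 2 ^ p * μ (closedBall x t)}
  have hnull : σ (S \ G) = 0 := by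
    refine measure_eq_zero_of_measure_closedBall_le_pow_succ σ fun x ⟨hxS, hxG⟩ => ?_
    simp only [G, mem_ofPred_eq, not_frequently, not_le] at hxG
    obtain ⟨δ, hδ, hδG⟩ := (nhdsGT_basis (0 : ℝ)).eventually_iff.1 hxG
    refine ⟨c * μ (closedBall x δ) * ENNReal.ofReal (4 / δ) ^ p,
      by have := measure_closedBall_lt_top (μ := μ) (x := x) (r := δ); finiteness, δ / 2,
      half_pos hδ, fun t ht => ?_⟩
    have h2t : 2 * t ∈ Ioo 0 δ := ⟨by linarith [ht.1], by linarith [ht.2]⟩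
    calc σ (closedBall x t) ≤ c * μ (closedBall x (2 * t)) := hS x hxS t ht.1
      _ ≤ c * (μ (closedBall x δ) * ENNReal.ofReal (2 * (2 * t) / δ) ^ p) := by
          gcongr
          exact measure_closedBall_le_of_forall_two_pow_mul_le μ (fun s hs => (hδG hs).le) h2t
      _ = _ := by
          rw [show 2 * (2 * t) / δ = 4 / δ * t by ring, ENNReal.ofReal_mul (by positivity),
            mul_pow]
          ring
  have hdoubling : ∀ T, σ (T ∩ S ∩ G) ≤ ((2 ^ p * c) • μ) (T ∩ S ∩ G) := fun T =>
    (Besicovitch.vitaliFamily σ).measure_le_of_frequently_le _ .rfl _ fun x ⟨⟨_, hxS⟩, hxG⟩ =>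
      (Besicovitch.tendsto_filterAt σ x).frequently <|
        (hxG.and_eventually self_mem_nhdsWithin).mono fun t ⟨hdb, ht⟩ => by
          calc σ (closedBall x t) ≤ c * μ (closedBall x (2 * t)) := hS x hxS t ht
            _ ≤ c * (2 ^ p * μ (closedBall x t)) := by gcongr
            _ = ((2 ^ p * c) • μ) (closedBall x t) := by
                rw [Measure.smul_apply, ENNReal.smul_def, smul_eq_mul]; push_cast; ring
  refine Measure.le_iff.2 fun T hT => ?_
  calc σ.restrict S T ≤ σ (T ∩ S ∩ G) + σ ((T ∩ S) \ G) := by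
        rw [Measure.restrict_apply hT]; exact measure_le_inter_add_sdiff _ _ _
    _ = σ (T ∩ S ∩ G) := by
        rw [measure_mono_null (sdiff_subset_sdiff_left inter_subset_right) hnull, add_zero]
    _ ≤ ((2 ^ p * c) • μ) T :=
        (hdoubling T).trans (measure_mono (inter_subset_left.trans inter_subset_left))

theorem exists_calderonZygmund_cover (σ μ : Measure E) [SFinite σ]
    [IsLocallyFiniteMeasure μ] {S : Set E} (hS : Bornology.IsBounded S) (hσS : σ Sᶜ = 0)
    (hμS : μ Sᶜ = 0) {c : ℝ≥0} (hσμ : σ univ ≤ c * μ univ) :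
    ∃ (N : ℕ) (ι : Type u) (_ : Countable ι) (x : ι → E) (t : ι → ℝ),
      (∀ j, 0 < t j) ∧
      (∀ y, ∑' j, (closedBall (x j) (t j)).indicator (fun _ => (1 : ℝ≥0∞)) y ≤ N) ∧
      (∀ j, c * μ (closedBall (x j) (2 * t j)) < σ (closedBall (x j) (t j))) ∧
      (∀ j, ∀ η : ℝ, 2 < η →
        σ (closedBall (x j) (η * t j)) ≤ c * μ (closedBall (x j) (2 * (η * t j)))) ∧
      σ.restrict (⋃ j, closedBall (x j) (t j))ᶜ ≤ (2 ^ (finrank ℝ E + 1) * c) • μ := by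
  set heavy : E → Set ℝ := fun x => {t | 0 < t ∧ c * μ (closedBall x (2 * t)) < σ (closedBall x t)}
  set bad := {x | (heavy x).Nonempty}
  have hheavy_lt : ∀ x, ∀ t ∈ heavy x, t < diam S := fun x t ht =>
    not_le.1 fun hle => (measure_closedBall_le_of_diam_le hS hσS hμS hσμ hle).not_gt ht.2
  have hsel : ∀ x, ∃ t, x ∈ bad →
      t ∈ heavy x ∧
        ∀ η : ℝ, 2 < η → σ (closedBall x (η * t)) ≤ c * μ (closedBall x (2 * (η * t))) := by
    intro x
    by_cases hx : x ∈ bad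
    · obtain ⟨t, ht, hmax⟩ := exists_mem_forall_two_lt_mul_notMem hx
        ⟨diam S, fun t ht => (hheavy_lt x t ht).le⟩ fun t ht => ht.1
      refine ⟨t, fun _ => ⟨ht, fun η hη => ?_⟩⟩
      by_contra hlt
      exact hmax η hη ⟨by nlinarith [ht.1], not_le.1 hlt⟩
    · exact ⟨0, fun h => absurd h hx⟩
  choose r hr using hsel
  obtain ⟨N, ι, hι, x, hxbad, hcover, hoverlap⟩ := exists_closedBall_covering_tsum_indicator_le
    (s := bad) (r := r) (fun x hx => (hr x hx).1.1) (R := diam S)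
    fun x hx => (hheavy_lt x _ (hr x hx).1).le
  refine ⟨N, ι, hι, x, fun j => r (x j), fun j => (hr _ (hxbad j)).1.1, hoverlap,
    fun j => (hr _ (hxbad j)).1.2, fun j => (hr _ (hxbad j)).2, ?_⟩
  refine (Measure.restrict_mono (compl_subset_compl.2 hcover) le_rfl).trans ?_
  refine restrict_le_smul_of_measure_closedBall_le σ μ c fun y hy t ht => ?_
  by_contra hlt
  exact hy ⟨t, ht, not_le.1 hlt⟩

theorem Bornology.IsBounded.hausdorffMeasure_finrank_lt_top {K : Set E}
    (hK : Bornology.IsBounded K) : μH[finrank ℝ E] K < ∞ := by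
  let e := (Module.finBasis ℝ E).equivFun.toContinuousLinearEquiv
  have hvol : (μH[finrank ℝ E] : Measure (Fin (finrank ℝ E) → ℝ)) = volume := by
    have := hausdorffMeasure_pi_real (ι := Fin (finrank ℝ E))
    rwa [Fintype.card_fin] at this
  calc μH[finrank ℝ E] K = μH[finrank ℝ E] (e.symm '' (e '' K)) := by rw [e.symm_image_image]
    _ ≤ _ := e.symm.lipschitz.hausdorffMeasure_image_le (Nat.cast_nonneg _) _
    _ < ∞ := by
        rw [hvol]
        exact ENNReal.mul_lt_top (by finiteness)
          (e.lipschitz.isBounded_image hK).measure_lt_top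

end FiniteDimensional

theorem exists_withDensity_eq_of_le_smul {α : Type*} [MeasurableSpace α] {τ μ : Measure α}
    [SigmaFinite τ] [SigmaFinite μ] {κ : ℝ≥0} (h : τ ≤ κ • μ) :
    ∃ D : α → ℝ≥0, Measurable D ∧ (∀ y, D y ≤ κ) ∧ μ.withDensity (fun y => D y) = τ := by
  have hac : τ ≪ μ := Measure.absolutelyContinuous_of_le_smul (c := κ) h
  have hle : τ.rnDeriv μ ≤ᵐ[μ] fun _ => κ := by
    refine ae_le_of_forall_setLIntegral_le_of_sigmaFinite (Measure.measurable_rnDeriv τ μ)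
      fun s hs _ => ?_
    calc ∫⁻ y in s, τ.rnDeriv μ y ∂μ ≤ τ s := Measure.setLIntegral_rnDeriv_le s
      _ ≤ (κ • μ) s := h s
      _ = ∫⁻ _ in s, (κ : ℝ≥0∞) ∂μ := by
          rw [setLIntegral_const, Measure.smul_apply, ENNReal.smul_def, smul_eq_mul, mul_comm]
  refine ⟨fun y => min (τ.rnDeriv μ y).toNNReal κ,
    (Measure.measurable_rnDeriv τ μ).ennreal_toNNReal.min measurable_const,
    fun y => min_le_right _ _, ?_⟩
  conv_rhs => rw [← Measure.withDensity_rnDeriv_eq τ μ hac]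
  refine withDensity_congr_ae (hle.mono fun y hy => ?_)
  have hfin : τ.rnDeriv μ y ≠ ∞ := ne_top_of_le_ne_top ENNReal.coe_ne_top hy
  dsimp only
  rw [min_eq_left (by simpa using ENNReal.toNNReal_mono ENNReal.coe_ne_top hy),
    ENNReal.coe_toNNReal hfin]

theorem exists_setIntegral_eq_of_restrict_le_smul {α F : Type*} [MeasurableSpace α]
    [NormedAddCommGroup F] [NormedSpace ℝ F] {σ μ : Measure α} [IsFiniteMeasure σ]
    [SigmaFinite μ] {g : α → F} (hgm : StronglyMeasurable g) (hg : ∀ᵐ y ∂σ, ‖g y‖ ≤ 1) {U : Set α}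
    {κ : ℝ≥0} (hle : σ.restrict U ≤ κ • μ) :
    ∃ f : α → F, Integrable f μ ∧ (∀ y, ‖f y‖ ≤ κ) ∧
      ∀ s, MeasurableSet s → s ⊆ U → ∫ y in s, g y ∂σ = ∫ y in s, f y ∂μ := by
  obtain ⟨D, hDm, hDκ, hD⟩ := exists_withDensity_eq_of_le_smul hle
  -- `‖g‖ ≤ 1` only `σ`-a.e., whereas `‖f‖ ≤ κ` must hold everywhere
  set g₁ := {y | ‖g y‖ ≤ 1}.indicator g
  have hg₁m : StronglyMeasurable g₁ :=
    hgm.indicator (measurableSet_le hgm.norm.measurable measurable_const)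
  have hg₁ : ∀ y, ‖g₁ y‖ ≤ 1 := fun y => by
    by_cases hy : ‖g y‖ ≤ 1
    · simpa [g₁, indicator_of_mem (show y ∈ {y | ‖g y‖ ≤ 1} from hy)] using hy
    · simp [g₁, indicator_of_notMem (show y ∉ {y | ‖g y‖ ≤ 1} from hy)]
  have hgg₁ : g =ᵐ[σ] g₁ := hg.mono fun y hy => (indicator_of_mem (s := {y | ‖g y‖ ≤ 1}) hy g).symm
  refine ⟨fun y => D y • g₁ y, ?_, fun y => ?_, fun s hs hsU => ?_⟩
  · rw [← integrable_withDensity_iff_integrable_smul hDm, hD]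
    exact Integrable.of_bound hg₁m.aestronglyMeasurable 1 (ae_of_all _ hg₁)
  · change ‖D y • g₁ y‖ ≤ κ
    rw [NNReal.smul_def, norm_smul, Real.norm_eq_abs, NNReal.abs_eq]
    exact (mul_le_mul (NNReal.coe_le_coe.2 (hDκ y)) (hg₁ y) (norm_nonneg _) κ.2).trans_eq
      (mul_one _)
  · calc ∫ y in s, g y ∂σ = ∫ y in s, g₁ y ∂σ.restrict U := by
          rw [Measure.restrict_restrict_of_subset hsU]
          exact integral_congr_ae (ae_restrict_of_ae hgg₁)
      _ = ∫ y in s, D y • g₁ y ∂μ := by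
          rw [← hD, restrict_withDensity hs, integral_withDensity_eq_integral_smul hDm]

theorem MeasurableEquiv.restrict_preimage_le_smul {α β : Type*} [MeasurableSpace α]
    [MeasurableSpace β] (e : α ≃ᵐ β) {σ μ : Measure α} {s : Set β} {κ : ℝ≥0}
    (h : (σ.map e).restrict s ≤ κ • μ.map e) : σ.restrict (e ⁻¹' s) ≤ κ • μ := by
  have := Measure.map_mono h e.symm.measurable
  rwa [e.restrict_map, Measure.map_smul, e.map_symm_map, e.map_symm_map] at this

theorem hausdorffMeasure_lipschitzGraph_inter_closedBall_lt_top (n m : ℕ)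
    {A : EuclideanSpace ℝ (Fin n) → EuclideanSpace ℝ (Fin m)} {L : ℝ≥0} (hA : LipschitzWith L A)
    (x₀ : EuclideanSpace ℝ (Fin (n + m))) (r : ℝ) :
    μH[n] ({x | piV n m x = A (piH n m x)} ∩ closedBall x₀ r) < ∞ := by
  let F := EuclideanSpace.finAddEquivProd (𝕜 := ℝ) (n := n) (m := m)
  have hF : ∀ x, F x = (piH n m x, piV n m x) := fun _ => rfl
  have hγ := F.symm.lipschitz.comp (LipschitzWith.id.prodMk hA)
  have hsub : {x | piV n m x = A (piH n m x)} ∩ closedBall x₀ r ⊆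
      (fun u => F.symm (u, A u)) '' ((fun x => (F x).1) '' closedBall x₀ r) := by
    rintro x ⟨hx, hxB⟩
    refine ⟨piH n m x, mem_image_of_mem _ hxB, ?_⟩
    change F.symm (piH n m x, A (piH n m x)) = x
    rw [← hx.out, ← hF, F.symm_apply_apply]
  have hbdd : Bornology.IsBounded ((fun x => (F x).1) '' closedBall x₀ r) :=
    ((isCompact_closedBall x₀ r).image (continuous_fst.comp F.continuous)).isBounded
  calc _ ≤ μH[n] ((fun u => F.symm (u, A u)) '' ((fun x => (F x).1) '' closedBall x₀ r)) :=
        measure_mono hsub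
    _ ≤ _ := hγ.hausdorffMeasure_image_le (Nat.cast_nonneg _) _
    _ < ∞ := ENNReal.mul_lt_top (by finiteness) (by
        simpa using hbdd.hausdorffMeasure_finrank_lt_top)

theorem cube_two_mul_eq_preimage_closedBall (d : ℕ) (c : EuclideanSpace ℝ (Fin d)) {t : ℝ}
    (ht : 0 ≤ t) : cube d c (2 * t) = WithLp.ofLp ⁻¹' closedBall (WithLp.ofLp c) t := by
  ext y
  simp [cube, dist_pi_le_iff ht, Real.dist_eq]

theorem exists_calderonZygmund_cubes {d : ℕ} (σ μ : Measure (EuclideanSpace ℝ (Fin d)))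
    [IsFiniteMeasure σ] [IsFiniteMeasure μ] {S : Set (EuclideanSpace ℝ (Fin d))}
    (hS : Bornology.IsBounded S) (hσS : σ Sᶜ = 0) (hμS : μ Sᶜ = 0) {c : ℝ≥0}
    (hσμ : σ univ ≤ c * μ univ) :
    ∃ (N : ℕ) (ι : Type) (_ : Countable ι) (x : ι → EuclideanSpace ℝ (Fin d)) (l : ι → ℝ),
      (∀ j, 0 < l j) ∧
      (∀ y, ∑' j, (cube d (x j) (l j)).indicator (fun _ => (1 : ℝ≥0∞)) y ≤ N) ∧
      (∀ j, c * μ (cube d (x j) (2 * l j)) < σ (cube d (x j) (l j))) ∧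
      (∀ j, ∀ η : ℝ, 2 < η → σ (cube d (x j) (η * l j)) ≤ c * μ (cube d (x j) (2 * η * l j))) ∧
      σ.restrict (⋃ j, cube d (x j) (l j))ᶜ ≤ (2 ^ (d + 1) * c) • μ := by
  let e := (MeasurableEquiv.toLp 2 (Fin d → ℝ)).symm
  have he : ⇑e = WithLp.ofLp := MeasurableEquiv.coe_toLp_symm _ _
  have hcube : ∀ y s, 0 ≤ s → cube d (e.symm y) (2 * s) = e ⁻¹' closedBall y s := fun y s hs => by
    rw [cube_two_mul_eq_preimage_closedBall _ _ hs, he]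
    rfl
  have hS' : Bornology.IsBounded (e '' S) := he ▸ (PiLp.lipschitzWith_ofLp 2 _).isBounded_image hS
  obtain ⟨N, ι, hι, x, t, ht, hoverlap, hheavy, hlight, hle⟩ :=
    exists_calderonZygmund_cover (σ.map e) (μ.map e) hS'
      (by rwa [e.map_apply, preimage_compl, e.preimage_image])
      (by rwa [e.map_apply, preimage_compl, e.preimage_image])
      (by rwa [e.map_apply, e.map_apply, preimage_univ])
  refine ⟨N, ι, hι, fun j => e.symm (x j), fun j => 2 * t j, fun j => by linarith [ht j],
    fun y => ?_, fun j => ?_, fun j η hη => ?_, ?_⟩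
  · simp_rw [hcube _ _ (ht _).le]
    exact hoverlap (e y)
  · rw [hcube _ _ (by linarith [ht j]), hcube _ _ (ht j).le, ← e.map_apply, ← e.map_apply]
    exact hheavy j
  · have hηt : 0 ≤ η * t j := (mul_pos (by linarith) (ht j)).le
    rw [show η * (2 * t j) = 2 * (η * t j) by ring,
      show 2 * η * (2 * t j) = 2 * (2 * (η * t j)) by ring, hcube _ _ hηt,
      hcube _ _ (by linarith), ← e.map_apply, ← e.map_apply]
    exact hlight j η hη
  · rw [finrank_fin_fun] at hle
    simpa only [hcube _ _ (ht _).le, preimage_compl, preimage_iUnion] using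
      e.restrict_preimage_le_smul hle

/-- The complex measure `ν` of the paper is `g • σ`, with `σ = |ν|` and `‖g‖ = 1` `σ`-a.e. -/
theorem stmt8_general (n m : ℕ)
    (A : EuclideanSpace ℝ (Fin n) → EuclideanSpace ℝ (Fin m)) (L : ℝ≥0)
    (hA : LipschitzWith L A)
    (x₀ : EuclideanSpace ℝ (Fin (n + m))) (r : ℝ)
    (μ : Measure (EuclideanSpace ℝ (Fin (n + m))))
    (hμ : μ = (μH[n]).restrict
      ({x | piV n m x = A (piH n m x)} ∩ closedBall x₀ r))
    (σ : Measure (EuclideanSpace ℝ (Fin (n + m)))) (hσfin : IsFiniteMeasure σ)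
    (g : EuclideanSpace ℝ (Fin (n + m)) → ℂ) (hgm : Measurable g)
    (hg : ∀ᵐ y ∂σ, ‖g y‖ = 1)
    (hsupp : ∃ Kc : Set (EuclideanSpace ℝ (Fin (n + m))), IsCompact Kc ∧ σ Kcᶜ = 0)
    (lam : ℝ)
    (hlam : (2 : ℝ≥0∞) ^ (n + m + 1) * σ univ < ENNReal.ofReal lam * μ univ) :
    ∃ C : ℝ≥0∞, C ≠ ⊤ ∧
      ∃ (ι : Type) (_ : Countable ι)
        (c : ι → EuclideanSpace ℝ (Fin (n + m))) (l : ι → ℝ)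
        (f : EuclideanSpace ℝ (Fin (n + m)) → ℂ),
      (∀ j, 0 < l j) ∧
      (∀ x, ∑' j : ι, (cube (n + m) (c j) (l j)).indicator (fun _ => (1 : ℝ≥0∞)) x ≤ C) ∧
      Integrable f μ ∧
      (∀ j, ENNReal.ofReal (lam / 2 ^ (n + m + 1)) * μ (cube (n + m) (c j) (2 * l j))
          < σ (cube (n + m) (c j) (l j))) ∧
      (∀ j, ∀ η : ℝ, 2 < η →
        σ (cube (n + m) (c j) (η * l j))
          ≤ ENNReal.ofReal (lam / 2 ^ (n + m + 1)) * μ (cube (n + m) (c j) (2 * η * l j))) ∧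
      (∀ᵐ x ∂μ, ‖f x‖ ≤ lam) ∧
      (∀ s : Set (EuclideanSpace ℝ (Fin (n + m))), MeasurableSet s →
        s ⊆ (⋃ j, cube (n + m) (c j) (l j))ᶜ →
        ∫ y in s, g y ∂σ = ∫ y in s, f y ∂μ) := by
  obtain ⟨K, hK, hσK⟩ := hsupp
  have hlam0 : 0 < lam := by
    by_contra! h
    simp [ENNReal.ofReal_eq_zero.2 h] at hlam
  have : IsFiniteMeasure μ := ⟨by
    rw [hμ, Measure.restrict_apply_univ]
    exact hausdorffMeasure_lipschitzGraph_inter_closedBall_lt_top n m hA x₀ r⟩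
  -- `ENNReal.ofReal r` unfolds to `↑r.toNNReal`, so `↑c` is the constant of the statement
  set c := (lam / 2 ^ (n + m + 1)).toNNReal
  have hc : 2 ^ (n + m + 1) * c = lam.toNNReal := by
    apply NNReal.eq
    rw [NNReal.coe_mul, NNReal.coe_pow, Real.coe_toNNReal _ (by positivity),
      Real.coe_toNNReal _ hlam0.le, NNReal.coe_ofNat]
    field_simp
  have hσμ : σ univ ≤ c * μ univ := by
    refine (ENNReal.mul_le_mul_iff_right (a := 2 ^ (n + m + 1)) (by positivity) (by simp)).1 ?_
    calc 2 ^ (n + m + 1) * σ univ ≤ ENNReal.ofReal lam * μ univ := hlam.le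
      _ = 2 ^ (n + m + 1) * (c * μ univ) := by
          rw [← mul_assoc, ENNReal.ofReal, ← hc]
          push_cast
          rfl
  have hμB : μ (closedBall x₀ r)ᶜ = 0 := by
    rw [hμ, Measure.restrict_apply measurableSet_closedBall.compl]
    exact measure_mono_null (fun y hy => (hy.1 hy.2.2).elim) measure_empty
  obtain ⟨N, ι, hι, x, l, hl, hoverlap, hheavy, hlight, hle⟩ :=
    exists_calderonZygmund_cubes σ μ (hK.isBounded.union isBounded_closedBall)
      (measure_mono_null (compl_subset_compl.2 subset_union_left) hσK)
      (measure_mono_null (compl_subset_compl.2 subset_union_right) hμB) hσμ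
  rw [hc] at hle
  obtain ⟨f, hfint, hfbound, hf⟩ := exists_setIntegral_eq_of_restrict_le_smul
    hgm.stronglyMeasurable (hg.mono fun _ hy => hy.le) hle
  exact ⟨N, ENNReal.natCast_ne_top N, ι, hι, x, l, f, hl, hoverlap, hfint, hheavy, hlight,
    ae_of_all _ fun y => (hfbound y).trans_eq (Real.coe_toNNReal _ hlam0.le), hf⟩

/-- Calderón–Zygmund decomposition, part (a): with `μ := ℋ^n` restricted to
`Γ ∩ B` for a Lipschitz graph `Γ ⊂ ℝ^d` (`d = n + m`) and a ball `B`, and a compactly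
supported finite complex Radon measure `ν` (encoded by its polar decomposition `ν = g·σ`
with `σ = |ν|` a finite measure and `‖g‖ = 1` `σ`-a.e.), for every
`λ > 2^{d+1}‖ν‖/‖μ‖` there are cubes `{Q_j}` with bounded overlap and `f ∈ L¹(μ)` with:
(i) `|ν|(Q_j) > 2^{−d−1} λ μ(2Q_j)`; (ii) `|ν|(ηQ_j) ≤ 2^{−d−1} λ μ(2ηQ_j)` for `η > 2`;
(iii) `ν = f μ` outside `Ω := ⋃ Q_j` and `|f| ≤ λ` `μ`-a.e. -/
theorem stmt8 (n m : ℕ) (hn : 1 ≤ n) (hm : 1 ≤ m)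
    (A : EuclideanSpace ℝ (Fin n) → EuclideanSpace ℝ (Fin m)) (L : ℝ≥0)
    (hA : LipschitzWith L A)
    (x₀ : EuclideanSpace ℝ (Fin (n + m))) (r : ℝ) (hr : 0 < r)
    (μ : Measure (EuclideanSpace ℝ (Fin (n + m))))
    (hμ : μ = (μH[n]).restrict
      ({x | piV n m x = A (piH n m x)} ∩ closedBall x₀ r))
    (σ : Measure (EuclideanSpace ℝ (Fin (n + m)))) (hσfin : IsFiniteMeasure σ)
    (g : EuclideanSpace ℝ (Fin (n + m)) → ℂ) (hgm : Measurable g)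
    (hg : ∀ᵐ y ∂σ, ‖g y‖ = 1)
    (hsupp : ∃ Kc : Set (EuclideanSpace ℝ (Fin (n + m))), IsCompact Kc ∧ σ Kcᶜ = 0)
    (lam : ℝ)
    (hlam : (2 : ℝ≥0∞) ^ (n + m + 1) * σ univ < ENNReal.ofReal lam * μ univ) :
    ∃ C : ℝ≥0∞, C ≠ ⊤ ∧
      ∃ (ι : Type) (_ : Countable ι)
        (c : ι → EuclideanSpace ℝ (Fin (n + m))) (l : ι → ℝ)
        (f : EuclideanSpace ℝ (Fin (n + m)) → ℂ),
      (∀ j, 0 < l j) ∧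
      (∀ x, ∑' j : ι, (cube (n + m) (c j) (l j)).indicator (fun _ => (1 : ℝ≥0∞)) x ≤ C) ∧
      Integrable f μ ∧
      (∀ j, ENNReal.ofReal (lam / 2 ^ (n + m + 1)) * μ (cube (n + m) (c j) (2 * l j))
          < σ (cube (n + m) (c j) (l j))) ∧
      (∀ j, ∀ η : ℝ, 2 < η →
        σ (cube (n + m) (c j) (η * l j))
          ≤ ENNReal.ofReal (lam / 2 ^ (n + m + 1)) * μ (cube (n + m) (c j) (2 * η * l j))) ∧
      (∀ᵐ x ∂μ, ‖f x‖ ≤ lam) ∧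
      (∀ s : Set (EuclideanSpace ℝ (Fin (n + m))), MeasurableSet s →
        s ⊆ (⋃ j, cube (n + m) (c j) (l j))ᶜ →
        ∫ y in s, g y ∂σ = ∫ y in s, f y ∂μ) :=
  stmt8_general n m A L hA x₀ r μ hμ σ hσfin g hgm hg hsupp lam hlam
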